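/- Let (c_n) with c_n ≥ 0, c_1 > 0, define (a_n) by a_0 = 1, a_n = Σ_{k=1}^n c_k a_{n-k}, and let H be the weighted Hardy space on 𝔻 with ‖z^n‖²_H = 1/a_n. Then the multiplier norm of the monomial z^n on H equals its Hilbert space norm: ‖z^n‖²_{Mult(H)} = 1/a_n. -/

import Mathlib

/-!
The sequence `a` is a renewal sequence with nonnegative weights `c`, hence supermultiplicative:
`a m * a n ≤ a (m + n)`. With `a 0 = 1` this gives `a k / a (n + k) ≤ 1 / a n` for every `k`,
with equality at `k = 0`. Positivity of `a` also follows, from `a n ≥ (a 1) ^ n = (c 1) ^ n`.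
-/

open Finset

theorem renewal_nonneg {c a : ℕ → ℝ} (hc : ∀ n, 0 ≤ c n) (ha0 : a 0 = 1)
    (ha : ∀ n, 1 ≤ n → a n = ∑ k ∈ Icc 1 n, c k * a (n - k)) (n : ℕ) : 0 ≤ a n := by
  induction n using Nat.strong_induction_on with
  | _ n ih =>
    rcases Nat.eq_zero_or_pos n with rfl | hn
    · exact ha0 ▸ zero_le_one
    · rw [ha n hn]
      refine sum_nonneg fun k hk => mul_nonneg (hc k) (ih _ ?_)
      have := (mem_Icc.mp hk).1
      omega

theorem renewal_mul_le_add {c a : ℕ → ℝ} (hc : ∀ n, 0 ≤ c n) (ha0 : a 0 = 1)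
    (ha : ∀ n, 1 ≤ n → a n = ∑ k ∈ Icc 1 n, c k * a (n - k)) (m n : ℕ) :
    a m * a n ≤ a (m + n) := by
  induction m using Nat.strong_induction_on with
  | _ m ih =>
    rcases Nat.eq_zero_or_pos m with rfl | hm
    · simp [ha0]
    · rw [ha m hm, ha (m + n) (by omega), sum_mul]
      calc ∑ k ∈ Icc 1 m, c k * a (m - k) * a n
          ≤ ∑ k ∈ Icc 1 m, c k * a (m + n - k) := by
            refine sum_le_sum fun k hk => ?_
            obtain ⟨hk1, hkm⟩ := mem_Icc.mp hk
            have hshift : m - k + n = m + n - k := by omega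
            rw [mul_assoc, ← hshift]
            exact mul_le_mul_of_nonneg_left (ih (m - k) (by omega)) (hc k)
        _ ≤ ∑ k ∈ Icc 1 (m + n), c k * a (m + n - k) :=
            sum_le_sum_of_subset_of_nonneg (Icc_subset_Icc_right (by omega))
              fun k _ _ => mul_nonneg (hc k) (renewal_nonneg hc ha0 ha _)

theorem renewal_pos {c a : ℕ → ℝ} (hc : ∀ n, 0 ≤ c n) (hc1 : 0 < c 1) (ha0 : a 0 = 1)
    (ha : ∀ n, 1 ≤ n → a n = ∑ k ∈ Icc 1 n, c k * a (n - k)) (n : ℕ) : 0 < a n := by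
  have ha1 : a 1 = c 1 := by simp [ha 1 le_rfl, ha0]
  have hpow : a 1 ^ n ≤ a n := by
    induction n with
    | zero => simp [ha0]
    | succ n ih =>
      calc a 1 ^ (n + 1) = a 1 ^ n * a 1 := pow_succ _ _
        _ ≤ a n * a 1 := mul_le_mul_of_nonneg_right ih (renewal_nonneg hc ha0 ha 1)
        _ ≤ a (n + 1) := renewal_mul_le_add hc ha0 ha n 1
  exact (pow_pos (ha1 ▸ hc1) n).trans_le hpow

theorem isGreatest_range_div_of_supermul {a : ℕ → ℝ} (hpos : ∀ n, 0 < a n) (ha0 : a 0 = 1)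
    (hmul : ∀ m n, a m * a n ≤ a (m + n)) (n : ℕ) :
    IsGreatest (Set.range fun k => a k / a (n + k)) (1 / a n) := by
  refine ⟨⟨0, by simp [ha0]⟩, ?_⟩
  rintro _ ⟨k, rfl⟩
  rw [div_le_div_iff₀ (hpos _) (hpos _), one_mul, mul_comm]
  exact hmul n k

/-- for the weighted Hardy space with `‖z^n‖²_H = 1/a n`, where
`a 0 = 1`, `a n = ∑_{k=1}^n c k * a (n-k)`, `c k ≥ 0`, `c 1 > 0`, the square of
the multiplier norm of `z^n`, namely `sup_k ‖z^{n+k}‖²/‖z^k‖² = sup_k a k / a (n+k)`,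
equals its Hilbert space norm squared `1/a n`; i.e. `1/a n` is the greatest
element of `{a k / a (n+k) : k ∈ ℕ}`. -/
theorem stmt8 (c a : ℕ → ℝ) (hc : ∀ n, 0 ≤ c n) (hc1 : 0 < c 1)
    (ha0 : a 0 = 1)
    (ha : ∀ n, 1 ≤ n → a n = ∑ k ∈ Finset.Icc 1 n, c k * a (n - k)) :
    ∀ n : ℕ, IsGreatest (Set.range fun k => a k / a (n + k)) (1 / a n) :=
  isGreatest_range_div_of_supermul (renewal_pos hc hc1 ha0 ha) ha0
    (renewal_mul_le_add hc ha0 ha)
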